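/- arXiv:2112.09099 — 5 statements merged into one kernel-verified Lean document; each statement's English description precedes it below -/
import Mathlib

section
/- For every (possibly history-dependent) policy π there exists a stationary Markov policy π̂ (a single Borel kernel from S to A applied at every time) such that the discounted occupancy measures coincide: ν^{π̂} = ν^π. (Lemma: in particular π̂ may be taken as the disintegration of ν^π over its state marginal, π̂(da|s) being a regular conditional distribution of ν^π given s, chosen arbitrarily where the state marginal vanishes.) -/
open MeasureTheory ProbabilityTheory

noncomputable section

/-- A history of length `t`: the past `t` state-action pairs together with the current state. -/
abbrev Hist (S A : Type*) (t : ℕ) : Type _ := (Fin t → S × A) × S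

variable {S A : Type*} [MeasurableSpace S] [MeasurableSpace A]

/-- The law of the history `(s₀,a₀,…,s_{t-1},a_{t-1},s_t)` induced (via the Ionescu–Tulcea
construction) by the initial distribution `ν₀`, the (time-dependent) transition law `p`
and the history-dependent policy `π`. -/
def histLaw (ν₀ : Measure S) (p : ℕ → S × A → Measure S)
    (π : (t : ℕ) → Hist S A t → Measure A) : (t : ℕ) → Measure (Hist S A t)
  | 0 => ν₀.map fun s => (Fin.elim0, s)
  | t + 1 =>
      (histLaw ν₀ p π t).bind fun h =>
        (π t h).bind fun a =>
          (p t (h.2, a)).map fun s' => (Fin.snoc h.1 (h.2, a), s')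

/-- The law of the state-action pair `(s_t, a_t)`. -/
def pairLaw (ν₀ : Measure S) (p : ℕ → S × A → Measure S)
    (π : (t : ℕ) → Hist S A t → Measure A) (t : ℕ) : Measure (S × A) :=
  (histLaw ν₀ p π t).bind fun h => (π t h).map fun a => (h.2, a)

/-- The expected discounted reward `J(π) = E^π[Σ_t β^t r_t(s_t,a_t)]`. -/
def value (β : ℝ) (ν₀ : Measure S) (p : ℕ → S × A → Measure S)
    (π : (t : ℕ) → Hist S A t → Measure A) (r : ℕ → S × A → ℝ) : ℝ :=
  ∑' t : ℕ, β ^ t * ∫ x, r t x ∂(pairLaw ν₀ p π t)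

/-- A history-dependent policy: a Borel Markov kernel from histories to actions, at each time. -/
structure Policy (S A : Type*) [MeasurableSpace S] [MeasurableSpace A] where
  kernel : (t : ℕ) → Kernel (Hist S A t) A
  markov : ∀ t, IsMarkovKernel (kernel t)

/-- The action distributions prescribed by a history-dependent policy. -/
def Policy.run (π : Policy S A) : (t : ℕ) → Hist S A t → Measure A :=
  fun t h => π.kernel t h

/-- A Markov policy: a Borel Markov kernel from states to actions, at each time. -/
structure MarkovPolicy (S A : Type*) [MeasurableSpace S] [MeasurableSpace A] where
  kernel : ℕ → Kernel S A
  markov : ∀ t, IsMarkovKernel (kernel t)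

/-- A Markov policy regarded as a history-dependent policy. -/
def MarkovPolicy.run (π : MarkovPolicy S A) : (t : ℕ) → Hist S A t → Measure A :=
  fun t h => π.kernel t h.2

/-- The discounted occupancy measure `ν^π = Σ_t β^t law(s_t,a_t)` (time-homogeneous model). -/
def occupancy (β : ℝ) (ν₀ : Measure S) (p : S × A → Measure S)
    (π : (t : ℕ) → Hist S A t → Measure A) : Measure (S × A) :=
  Measure.sum fun t : ℕ => ENNReal.ofReal (β ^ t) • pairLaw ν₀ (fun _ => p) π t

end

namespace SOcc
open scoped ENNReal
set_option linter.unusedSectionVars false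


variable {α β γ : Type*} [MeasurableSpace α] [MeasurableSpace β] [MeasurableSpace γ]

lemma map_bind' {m : Measure α} {f : α → Measure β} {g : β → γ}
    (hf : Measurable f) (hg : Measurable g) :
    (m.bind f).map g = m.bind fun a => (f a).map g := by
  have h : Measurable fun a => (f a).map g := (Measure.measurable_map _ hg).comp hf
  ext s hs
  rw [Measure.map_apply hg hs, Measure.bind_apply (hg hs) hf.aemeasurable, Measure.bind_apply hs h.aemeasurable]
  exact lintegral_congr fun a => (Measure.map_apply hg hs).symm

lemma bind_map' {m : Measure α} {g : α → β} {f : β → Measure γ}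
    (hg : Measurable g) (hf : Measurable f) :
    (m.map g).bind f = m.bind (fun a => f (g a)) := by
  have h : Measurable fun a => f (g a) := hf.comp hg
  ext s hs
  rw [Measure.bind_apply hs hf.aemeasurable, Measure.bind_apply hs h.aemeasurable,
    lintegral_map (f := fun b => f b s) ((Measure.measurable_coe hs).comp hf) hg]

lemma bind_sum {ι : Type*} [Countable ι] {μ : ι → Measure α} {f : α → Measure β}
    (hf : Measurable f) :
    (Measure.sum μ).bind f = Measure.sum fun i => (μ i).bind f := by
  ext s hs
  rw [Measure.bind_apply hs hf.aemeasurable, lintegral_sum_measure, Measure.sum_apply _ hs]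
  exact tsum_congr fun i => (Measure.bind_apply hs hf.aemeasurable).symm

lemma bind_smul {c : ℝ≥0∞} {μ : Measure α} {f : α → Measure β} (hf : Measurable f) :
    (c • μ).bind f = c • μ.bind f := by
  ext s hs
  rw [Measure.bind_apply hs hf.aemeasurable, lintegral_smul_measure, Measure.smul_apply, smul_eq_mul,
    Measure.bind_apply hs hf.aemeasurable, smul_eq_mul]

lemma bind_add {μ ν : Measure α} {f : α → Measure β} (hf : Measurable f) :
    (μ + ν).bind f = μ.bind f + ν.bind f := by
  ext s hs
  rw [Measure.bind_apply hs hf.aemeasurable, lintegral_add_measure, Measure.add_apply,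
    Measure.bind_apply hs hf.aemeasurable, Measure.bind_apply hs hf.aemeasurable]

lemma map_sum {ι : Type*} [Countable ι] {μ : ι → Measure α} {f : α → β} (hf : Measurable f) :
    (Measure.sum μ).map f = Measure.sum fun i => (μ i).map f := by
  ext s hs
  rw [Measure.map_apply hf hs, Measure.sum_apply _ (hf hs), Measure.sum_apply _ hs]
  exact tsum_congr fun i => (Measure.map_apply hf hs).symm

lemma measurable_map_prod_mk (κ : Kernel α β) [IsSFiniteKernel κ] :
    Measurable fun a => (κ a).map (Prod.mk a) := by
  apply Measure.measurable_of_measurable_coe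
  intro s hs
  simp_rw [Measure.map_apply measurable_prodMk_left hs]
  exact Kernel.measurable_kernel_prodMk_left hs

lemma measurable_map_param (κ : Kernel α β) [IsSFiniteKernel κ] {G : α × β → γ}
    (hG : Measurable G) :
    Measurable fun a => (κ a).map (fun b => G (a, b)) := by
  have h1 := measurable_map_prod_mk κ
  have h2 : ∀ a, (κ a).map (fun b => G (a, b)) = ((κ a).map (Prod.mk a)).map G := by
    intro a; rw [Measure.map_map hG measurable_prodMk_left]; rfl
  simp_rw [h2]
  exact (Measure.measurable_map _ hG).comp h1

lemma measurable_bind_param (ρ : Kernel α β) [IsSFiniteKernel ρ] {F : α → β → Measure γ}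
    (hF : Measurable fun x : α × β => F x.1 x.2) : Measurable fun a => (ρ a).bind (F a) := by
  apply Measure.measurable_of_measurable_coe
  intro s hs
  have h1 : ∀ a, ((ρ a).bind (F a)) s = ∫⁻ b, F a b s ∂ρ a := fun a =>
    Measure.bind_apply hs (hF.comp measurable_prodMk_left).aemeasurable
  simp_rw [h1]
  exact Measurable.lintegral_kernel_prod_right' ((Measure.measurable_coe hs).comp hF)

lemma bind_prob {m : Measure α} [IsProbabilityMeasure m] {f : α → Measure β}
    (hf : Measurable f) (h : ∀ a, IsProbabilityMeasure (f a)) :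
    IsProbabilityMeasure (m.bind f) := by
  constructor
  rw [Measure.bind_apply MeasurableSet.univ hf.aemeasurable]
  simp only [measure_univ, lintegral_one]

lemma bind_univ_eq {m : Measure α} {f : α → Measure β}
    (hf : Measurable f) (h : ∀ a, f a Set.univ = 1) :
    m.bind f Set.univ = m Set.univ := by
  rw [Measure.bind_apply MeasurableSet.univ hf.aemeasurable]
  simp [h]

lemma compProd_eq_bind (μ : Measure α) [SFinite μ] (κ : Kernel α β) [IsSFiniteKernel κ] :
    μ ⊗ₘ κ = μ.bind fun a => (κ a).map (Prod.mk a) := by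
  ext s hs
  rw [Measure.compProd_apply hs, Measure.bind_apply hs (measurable_map_prod_mk κ).aemeasurable]
  exact lintegral_congr fun a => (Measure.map_apply measurable_prodMk_left hs).symm


section MDP

open Filter Topology

variable {S A : Type*} [MeasurableSpace S] [MeasurableSpace A]

lemma measurable_snocFun {t : ℕ} :
    Measurable fun (x : Hist S A t × A) => (Fin.snoc x.1.1 (x.1.2, x.2) : Fin (t+1) → S × A) := by
  apply measurable_pi_lambda
  intro i
  induction i using Fin.lastCases with
  | last =>
      simp only [Fin.snoc_last]; exact
        (measurable_snd.comp measurable_fst).prodMk measurable_snd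
  | cast j =>
      simp only [Fin.snoc_castSucc]; exact
        (measurable_pi_apply j).comp (measurable_fst.comp measurable_fst)

variable (p : Kernel (S × A) S) [IsMarkovKernel p]
variable (ν₀ : Measure S) [IsProbabilityMeasure ν₀]
variable (ρ : (t : ℕ) → Kernel (Hist S A t) A) [∀ t, IsMarkovKernel (ρ t)]

/-- history law for a kernel policy -/
noncomputable def HL (t : ℕ) : Measure (Hist S A t) :=
  histLaw ν₀ (fun _ => fun x => p x) (fun t h => ρ t h) t

/-- pair law for a kernel policy -/
noncomputable def PL (t : ℕ) : Measure (S × A) :=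
  pairLaw ν₀ (fun _ => fun x => p x) (fun t h => ρ t h) t

lemma HL_zero : HL p ν₀ ρ 0 = ν₀.map fun s => (Fin.elim0, s) := rfl

lemma HL_succ (t : ℕ) : HL p ν₀ ρ (t+1) = (HL p ν₀ ρ t).bind fun h =>
    (ρ t h).bind fun a => (p (h.2, a)).map fun s' => (Fin.snoc h.1 (h.2, a), s') := rfl

lemma PL_def (t : ℕ) : PL p ν₀ ρ t =
    (HL p ν₀ ρ t).bind fun h => (ρ t h).map fun a => (h.2, a) := rfl

set_option maxHeartbeats 1000000 in
lemma measurable_inner (t : ℕ) (h : Hist S A t) :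
    Measurable fun a : A =>
      (p (h.2, a)).map fun s' => ((Fin.snoc h.1 (h.2, a), s') : Hist S A (t+1)) := by
  have hq : Measurable fun a : A => ((h.2, a) : S × A) :=
    measurable_const.prodMk measurable_id
  have hG : Measurable fun y : A × S =>
      ((Fin.snoc h.1 (h.2, y.1), y.2) : Hist S A (t+1)) := by
    refine Measurable.prodMk ?_ measurable_snd
    exact measurable_snocFun.comp
      (measurable_const.prodMk measurable_fst :
        Measurable fun y : A × S => ((h, y.1) : Hist S A t × A))
  exact measurable_map_param (p.comap (fun a : A => ((h.2, a) : S × A)) hq) hG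

set_option maxHeartbeats 1000000 in
lemma measurable_step (t : ℕ) :
    Measurable fun h : Hist S A t => (ρ t h).bind fun a =>
      (p (h.2, a)).map fun s' => ((Fin.snoc h.1 (h.2, a), s') : Hist S A (t+1)) := by
  have hq : Measurable fun x : Hist S A t × A => ((x.1.2, x.2) : S × A) :=
    (measurable_snd.comp measurable_fst).prodMk measurable_snd
  have hG : Measurable fun y : (Hist S A t × A) × S =>
      ((Fin.snoc y.1.1.1 (y.1.1.2, y.1.2), y.2) : Hist S A (t+1)) :=
    (measurable_snocFun.comp measurable_fst).prodMk measurable_snd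
  have hΦ : Measurable fun x : Hist S A t × A =>
      (p (x.1.2, x.2)).map fun s' => ((Fin.snoc x.1.1 (x.1.2, x.2), s') : Hist S A (t+1)) :=
    measurable_map_param (p.comap (fun x : Hist S A t × A => ((x.1.2, x.2) : S × A)) hq) hG
  exact measurable_bind_param (ρ t) hΦ

lemma measurable_pairFun (t : ℕ) :
    Measurable fun h : Hist S A t => (ρ t h).map fun a => ((h.2, a) : S × A) :=
  measurable_map_param (ρ t) ((measurable_snd.comp measurable_fst).prodMk measurable_snd)

lemma HL_prob : ∀ t, IsProbabilityMeasure (HL p ν₀ ρ t) := by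
  intro t
  induction t with
  | zero =>
      rw [HL_zero]
      exact Measure.isProbabilityMeasure_map (measurable_const.prodMk measurable_id).aemeasurable
  | succ t ih =>
      rw [HL_succ]
      haveI := ih
      refine bind_prob (measurable_step p ρ t) fun h => ?_
      refine bind_prob (measurable_inner p t h) fun a => ?_
      exact Measure.isProbabilityMeasure_map (measurable_const.prodMk measurable_id).aemeasurable

lemma PL_prob (t : ℕ) : IsProbabilityMeasure (PL p ν₀ ρ t) := by
  rw [PL_def]
  haveI := HL_prob p ν₀ ρ t
  refine bind_prob (measurable_pairFun ρ t) fun h => ?_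
  exact Measure.isProbabilityMeasure_map (measurable_const.prodMk measurable_id).aemeasurable

lemma PL_fst (t : ℕ) :
    (PL p ν₀ ρ t).map Prod.fst = (HL p ν₀ ρ t).map Prod.snd := by
  rw [PL_def, map_bind' (measurable_pairFun ρ t) measurable_fst]
  have h1 : ∀ h : Hist S A t,
      ((ρ t h).map fun a => ((h.2, a) : S × A)).map Prod.fst = Measure.dirac h.2 := by
    intro h
    rw [Measure.map_map measurable_fst
      (measurable_const.prodMk measurable_id : Measurable fun a : A => ((h.2, a) : S × A))]
    have : (Prod.fst ∘ fun a => ((h.2, a) : S × A)) = fun _ => h.2 := rfl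
    rw [this, Measure.map_const, measure_univ, one_smul]
  simp_rw [h1]
  exact Measure.bind_dirac_eq_map _ measurable_snd

lemma HL_snd_zero : (HL p ν₀ ρ 0).map Prod.snd = ν₀ := by
  rw [HL_zero, Measure.map_map measurable_snd
    (measurable_const.prodMk measurable_id :
      Measurable fun s : S => (((Fin.elim0 : Fin 0 → S × A), s) : Hist S A 0))]
  have : (Prod.snd ∘ fun s : S => ((Fin.elim0 : Fin 0 → S × A), s)) = id := rfl
  rw [this, Measure.map_id]

lemma HL_snd_succ (t : ℕ) :
    (HL p ν₀ ρ (t+1)).map Prod.snd = (PL p ν₀ ρ t).bind fun x => p x := by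
  rw [HL_succ, map_bind' (measurable_step p ρ t) measurable_snd, PL_def,
    Measure.bind_bind (measurable_pairFun ρ t).aemeasurable p.measurable.aemeasurable]
  congr 1
  funext h
  rw [bind_map'
    (measurable_const.prodMk measurable_id : Measurable fun a : A => ((h.2, a) : S × A))
    p.measurable,
    map_bind' (measurable_inner p t h) measurable_snd]
  congr 1
  funext a
  rw [Measure.map_map measurable_snd
    (measurable_const.prodMk measurable_id :
      Measurable fun s' : S => ((Fin.snoc h.1 (h.2, a), s') : Hist S A (t+1)))]
  have : (Prod.snd ∘ fun s' : S => ((Fin.snoc h.1 (h.2, a), s') : Hist S A (t+1))) = id := rfl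
  rw [this, Measure.map_id]

/-- state-action embedding kernel applied as measure-valued map -/
noncomputable def scm (κ : Kernel S A) : S → Measure (S × A) := fun s => (κ s).map (Prod.mk s)

lemma measurable_scm (κ : Kernel S A) [IsSFiniteKernel κ] : Measurable (scm κ) :=
  measurable_map_prod_mk κ

/-- Bellman flow operator -/
noncomputable def Tk (κ : Kernel S A) : Measure S → Measure S :=
  fun μ => (μ.bind (scm κ)).bind fun x => p x

lemma Tk_add (κ : Kernel S A) [IsSFiniteKernel κ] (μ ν : Measure S) :
    Tk p κ (μ + ν) = Tk p κ μ + Tk p κ ν := by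
  unfold Tk
  rw [bind_add (measurable_scm κ), bind_add p.measurable]

lemma Tk_smul (κ : Kernel S A) [IsSFiniteKernel κ] (c : ℝ≥0∞) (μ : Measure S) :
    Tk p κ (c • μ) = c • Tk p κ μ := by
  unfold Tk
  rw [bind_smul (measurable_scm κ), bind_smul p.measurable]

lemma Tk_univ (κ : Kernel S A) [IsMarkovKernel κ] (μ : Measure S) :
    Tk p κ μ Set.univ = μ Set.univ := by
  have h1 : ∀ s, scm κ s Set.univ = 1 := by
    intro s
    have h2 : IsProbabilityMeasure ((κ s).map (Prod.mk s)) :=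
      Measure.isProbabilityMeasure_map measurable_prodMk_left.aemeasurable
    simpa [scm] using h2.measure_univ
  unfold Tk
  rw [bind_univ_eq p.measurable fun x => measure_univ,
    bind_univ_eq (measurable_scm κ) h1]

section Stationary

variable (κ : Kernel S A) [IsMarkovKernel κ]

/-- the stationary kernel policy induced by `κ` -/
def ρκ : (t : ℕ) → Kernel (Hist S A t) A := fun _t =>
  κ.comap Prod.snd measurable_snd

instance (t : ℕ) : IsMarkovKernel (ρκ κ t) := by
  unfold ρκ; infer_instance

lemma PL_stat (t : ℕ) :
    PL p ν₀ (ρκ κ) t = ((HL p ν₀ (ρκ κ) t).map Prod.snd).bind (scm κ) := by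
  rw [PL_def, bind_map' measurable_snd (measurable_scm κ)]
  rfl

lemma HL_snd_stat (t : ℕ) :
    (HL p ν₀ (ρκ κ) t).map Prod.snd = (Tk p κ)^[t] ν₀ := by
  induction t with
  | zero => exact HL_snd_zero p ν₀ (ρκ κ)
  | succ t ih =>
      rw [HL_snd_succ, PL_stat, ih, Function.iterate_succ_apply']
      rfl

end Stationary

lemma occ_eq (β : ℝ) :
    occupancy β ν₀ (fun x => p x) (fun t h => ρ t h) =
      Measure.sum fun t => ENNReal.ofReal (β ^ t) • PL p ν₀ ρ t := rfl

lemma marginal_fixed (β : ℝ) (hβ0 : 0 ≤ β) :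
    (occupancy β ν₀ (fun x => p x) (fun t h => ρ t h)).map Prod.fst =
      ν₀ + ENNReal.ofReal β •
        ((occupancy β ν₀ (fun x => p x) (fun t h => ρ t h)).bind fun x => p x) := by
  rw [occ_eq, map_sum measurable_fst, bind_sum p.measurable]
  ext s hs
  simp only [Measure.map_smul, bind_smul p.measurable, Measure.sum_apply _ hs,
    Measure.add_apply, Measure.smul_apply, smul_eq_mul]
  have hterm : ∀ t, ENNReal.ofReal (β ^ t) * ((PL p ν₀ ρ t).map Prod.fst) s
      = ENNReal.ofReal (β ^ t) * ((HL p ν₀ ρ t).map Prod.snd) s := by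
    intro t; rw [PL_fst]
  rw [tsum_congr hterm, tsum_eq_zero_add' ENNReal.summable]
  congr 1
  · rw [pow_zero, ENNReal.ofReal_one, one_mul, HL_snd_zero]
  · rw [← ENNReal.tsum_mul_left]
    refine tsum_congr fun t => ?_
    rw [HL_snd_succ]
    rw [pow_succ, mul_comm (β ^ t) β, ENNReal.ofReal_mul hβ0, mul_assoc]

lemma iterate_add_smul {T : Measure S → Measure S}
    (hadd : ∀ μ ν, T (μ + ν) = T μ + T ν) (hsmul : ∀ (c : ℝ≥0∞) μ, T (c • μ) = c • T μ)
    (m : ℕ) (x y : Measure S) (c : ℝ≥0∞) :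
    T^[m] (x + c • y) = T^[m] x + c • T^[m] y := by
  induction m with
  | zero => simp
  | succ m ih =>
      rw [Function.iterate_succ_apply', Function.iterate_succ_apply',
        Function.iterate_succ_apply', ih, hadd, hsmul]

lemma iterate_fixed {T : Measure S → Measure S}
    (hadd : ∀ μ ν, T (μ + ν) = T μ + T ν) (hsmul : ∀ (c : ℝ≥0∞) μ, T (c • μ) = c • T μ)
    {μ μ0 : Measure S} {b : ℝ≥0∞} (h : μ = μ0 + b • T μ) (n : ℕ) :
    μ = (∑ k ∈ Finset.range n, b ^ k • T^[k] μ0) + b ^ n • T^[n] μ := by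
  induction n with
  | zero => simp
  | succ n ih =>
      calc μ = (∑ k ∈ Finset.range n, b ^ k • T^[k] μ0) + b ^ n • T^[n] (μ0 + b • T μ) := by
              rw [← h]; exact ih
      _ = (∑ k ∈ Finset.range n, b ^ k • T^[k] μ0)
            + (b ^ n • T^[n] μ0 + b ^ n • b • T^[n] (T μ)) := by
              rw [iterate_add_smul hadd hsmul, smul_add]
      _ = (∑ k ∈ Finset.range (n+1), b ^ k • T^[k] μ0) + b ^ (n+1) • T^[n+1] μ := by
              rw [Finset.sum_range_succ, smul_smul, ← pow_succ, ← Function.iterate_succ_apply,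
                add_assoc]

lemma eq_sum_of_fixed {T : Measure S → Measure S}
    (hadd : ∀ μ ν, T (μ + ν) = T μ + T ν) (hsmul : ∀ (c : ℝ≥0∞) μ, T (c • μ) = c • T μ)
    (huniv : ∀ μ, T μ Set.univ = μ Set.univ)
    {μ μ0 : Measure S} {b : ℝ≥0∞} (hb : b < 1) (hμ : μ Set.univ ≠ ⊤)
    (h : μ = μ0 + b • T μ) :
    μ = Measure.sum fun k => b ^ k • T^[k] μ0 := by
  have hmass : ∀ n, T^[n] μ Set.univ = μ Set.univ := by
    intro n
    induction n with
    | zero => rfl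
    | succ n ih => rw [Function.iterate_succ_apply', huniv, ih]
  ext s hs
  rw [Measure.sum_apply _ hs]
  simp only [Measure.smul_apply, smul_eq_mul]
  have hconst : ∀ n, μ s =
      (∑ k ∈ Finset.range n, b ^ k * T^[k] μ0 s) + b ^ n * T^[n] μ s := by
    intro n
    conv_lhs => rw [iterate_fixed hadd hsmul h n]
    rw [Measure.add_apply, Measure.smul_apply, smul_eq_mul, Measure.finset_sum_apply]
    simp only [Measure.smul_apply, smul_eq_mul]
  have hx : Tendsto (fun n => ∑ k ∈ Finset.range n, b ^ k * T^[k] μ0 s) atTop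
      (𝓝 (∑' k, b ^ k * T^[k] μ0 s)) := ENNReal.tendsto_nat_tsum _
  have hy : Tendsto (fun n => b ^ n * T^[n] μ s) atTop (𝓝 0) := by
    have h1 : Tendsto (fun n : ℕ => b ^ n * μ Set.univ) atTop (𝓝 0) := by
      have h2 := ENNReal.tendsto_pow_atTop_nhds_zero_of_lt_one hb
      simpa using ENNReal.Tendsto.mul_const h2 (Or.inr hμ)
    refine tendsto_of_tendsto_of_tendsto_of_le_of_le tendsto_const_nhds h1
      (fun n => zero_le) fun n => ?_
    exact mul_le_mul_right (le_trans (measure_mono (Set.subset_univ s)) (hmass n).le) _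
  have hlim : Tendsto (fun _ : ℕ => μ s) atTop (𝓝 ((∑' k, b ^ k * T^[k] μ0 s) + 0)) := by
    have := hx.add hy
    refine this.congr fun n => (hconst n).symm
  have := tendsto_nhds_unique tendsto_const_nhds hlim
  rw [add_zero] at this
  exact this

end MDP


end SOcc

/-- For every (possibly history-dependent) policy `π` there exists a
stationary Markov policy `π̂` — a single Borel Markov kernel from `S` to `A` applied at
every time — whose discounted occupancy measure coincides with that of `π`:
`ν^{π̂} = ν^π`. -/
theorem exists_stationary_markov_same_occupancy
    {S A : Type*} [MeasurableSpace S] [TopologicalSpace S] [PolishSpace S] [BorelSpace S]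
    [MeasurableSpace A] [TopologicalSpace A] [PolishSpace A] [BorelSpace A] [CompactSpace A]
    (β : ℝ) (hβ0 : 0 ≤ β) (hβ1 : β < 1)
    (p : Kernel (S × A) S) (hp : IsMarkovKernel p)
    (r : S × A → ℝ) (hrm : Measurable r)
    (hr0 : ∀ x, 0 ≤ r x) (C : ℝ) (hrC : ∀ x, r x ≤ C)
    (ν₀ : Measure S) (hν₀ : IsProbabilityMeasure ν₀)
    (π : Policy S A) :
    ∃ κ : Kernel S A, IsMarkovKernel κ ∧
      occupancy β ν₀ (fun x => p x) (fun _t h => κ h.2) =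
        occupancy β ν₀ (fun x => p x) π.run := by
  classical
  haveI := hp; haveI := hν₀
  haveI : ∀ t, IsMarkovKernel (π.kernel t) := π.markov
  cases isEmpty_or_nonempty A with
  | inl hA =>
      cases isEmpty_or_nonempty S with
      | inl hS =>
          refine ⟨0, ⟨fun s => isEmptyElim s⟩, ?_⟩
          haveI : IsEmpty (S × A) := ⟨fun x => hA.elim x.2⟩
          have h0 : ∀ m : Measure (S × A), m = 0 := fun m => m.eq_zero_of_isEmpty
          rw [h0 (occupancy β ν₀ (fun x => p x) fun _t h => (0 : Kernel S A) h.2),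
            h0 (occupancy β ν₀ (fun x => p x) π.run)]
      | inr hS =>
          exfalso
          obtain ⟨s⟩ := hS
          have h1 : IsProbabilityMeasure (π.kernel 0 (Fin.elim0, s)) :=
            (π.markov 0).isProbabilityMeasure _
          have h2 := h1.measure_univ
          have h3 : (Set.univ : Set A) = ∅ := Set.univ_eq_empty_iff.mpr hA
          rw [h3, measure_empty] at h2
          exact one_ne_zero h2.symm
  | inr hA =>
      haveI := hA
      set b : ENNReal := ENNReal.ofReal β with hbdef
      have hc : ∀ t : ℕ, ENNReal.ofReal (β ^ t) = b ^ t := fun t => ENNReal.ofReal_pow hβ0 t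
      have hb1 : b < 1 := ENNReal.ofReal_lt_one.mpr hβ1
      set ν : Measure (S × A) := occupancy β ν₀ (fun x => p x) π.run with hν
      have hν' : ν = Measure.sum fun t => ENNReal.ofReal (β ^ t) •
          SOcc.PL p ν₀ π.kernel t := rfl
      haveI hfin : IsFiniteMeasure ν := by
        constructor
        rw [hν', Measure.sum_apply _ MeasurableSet.univ]
        have h4 : ∀ t : ℕ,
            (ENNReal.ofReal (β ^ t) • SOcc.PL p ν₀ π.kernel t) Set.univ = b ^ t := by
          intro t
          haveI := SOcc.PL_prob p ν₀ π.kernel t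
          rw [Measure.smul_apply, smul_eq_mul, measure_univ, mul_one, hc]
        rw [tsum_congr h4, ENNReal.tsum_geometric]
        exact ENNReal.inv_lt_top.mpr (tsub_pos_iff_lt.mpr hb1)
      set κ : Kernel S A := ν.condKernel with hκ
      refine ⟨κ, inferInstance, ?_⟩
      have hdis : (ν.map Prod.fst).bind (SOcc.scm κ) = ν := by
        have h1 : ν.fst ⊗ₘ κ = ν := ν.disintegrate ν.condKernel
        rw [SOcc.compProd_eq_bind] at h1
        exact h1
      have hfix0 : ν.map Prod.fst = ν₀ + b • (ν.bind fun x => p x) :=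
        SOcc.marginal_fixed p ν₀ π.kernel β hβ0
      have hTν : SOcc.Tk p κ (ν.map Prod.fst) = ν.bind fun x => p x := by
        unfold SOcc.Tk
        rw [hdis]
      have hfix : ν.map Prod.fst = ν₀ + b • SOcc.Tk p κ (ν.map Prod.fst) := by
        rw [hTν]; exact hfix0
      have hμuniv : (ν.map Prod.fst) Set.univ ≠ ⊤ := by
        rw [Measure.map_apply measurable_fst MeasurableSet.univ, Set.preimage_univ]
        exact measure_ne_top ν _
      have hsum : ν.map Prod.fst = Measure.sum fun k => b ^ k • (SOcc.Tk p κ)^[k] ν₀ :=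
        SOcc.eq_sum_of_fixed (SOcc.Tk_add p κ) (SOcc.Tk_smul p κ) (SOcc.Tk_univ p κ)
          hb1 hμuniv hfix
      have hstat : occupancy β ν₀ (fun x => p x) (fun _t h => κ h.2)
          = Measure.sum fun t => ENNReal.ofReal (β ^ t) • SOcc.PL p ν₀ (SOcc.ρκ κ) t := rfl
      rw [hstat]
      have hPL : ∀ t, SOcc.PL p ν₀ (SOcc.ρκ κ) t =
          ((SOcc.Tk p κ)^[t] ν₀).bind (SOcc.scm κ) := by
        intro t; rw [SOcc.PL_stat, SOcc.HL_snd_stat]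
      calc (Measure.sum fun t => ENNReal.ofReal (β ^ t) • SOcc.PL p ν₀ (SOcc.ρκ κ) t)
          = Measure.sum fun t => b ^ t • ((SOcc.Tk p κ)^[t] ν₀).bind (SOcc.scm κ) := by
            congr 1
            funext t
            rw [hPL, hc]
      _ = (Measure.sum fun t => b ^ t • (SOcc.Tk p κ)^[t] ν₀).bind (SOcc.scm κ) := by
            rw [SOcc.bind_sum (SOcc.measurable_scm κ)]
            congr 1
            funext t
            rw [SOcc.bind_smul (SOcc.measurable_scm κ)]
      _ = (ν.map Prod.fst).bind (SOcc.scm κ) := by rw [← hsum]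
      _ = ν := hdis
end

section
/- For every (possibly history-dependent) policy π, the discounted state occupancy measure satisfies the recursion ν̃^π(B) = ν₀(B) + β ∫_{S×A} p(B|s,a) dν^π(s,a) for every Borel set B ⊆ S. -/
open MeasureTheory ProbabilityTheory

set_option maxHeartbeats 1000000

section AuxLemmas

open MeasureTheory ProbabilityTheory

variable {S A : Type*} [MeasurableSpace S] [MeasurableSpace A]

/-- Snoc-ing a state-action pair onto a history is measurable. -/
lemma measurable_snocFun (t : ℕ) :
    Measurable (fun q : Hist S A t × A => (Fin.snoc q.1.1 (q.1.2, q.2) : Fin (t+1) → S × A)) := by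
  refine measurable_pi_lambda _ fun i => ?_
  induction i using Fin.lastCases with
  | last =>
      simp only [Fin.snoc_last]
      exact (measurable_snd.comp measurable_fst).prodMk measurable_snd
  | cast i =>
      simp only [Fin.snoc_castSucc]
      exact (measurable_pi_apply i).comp (measurable_fst.comp measurable_fst)

/-- Mapping a kernel by a parameter-dependent function is measurable in the parameter. -/
lemma measurable_map_param {α β γ : Type*} [MeasurableSpace α] [MeasurableSpace β]
    [MeasurableSpace γ] (κ : Kernel α β) [IsSFiniteKernel κ] {f : α × β → γ}
    (hf : Measurable f) :
    Measurable (fun a => (κ a).map (fun b => f (a, b))) := by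
  apply Measure.measurable_of_measurable_coe
  intro C hC
  have h1 : ∀ a, (κ a).map (fun b => f (a, b)) C = κ a (Prod.mk a ⁻¹' (f ⁻¹' C)) := fun a =>
    Measure.map_apply (hf.comp measurable_prodMk_left) hC
  simp_rw [h1]
  exact Kernel.measurable_kernel_prodMk_left (hf hC)

/-- Binding a kernel with a parameter-dependent family of measures is measurable. -/
lemma measurable_bind_param {α β γ : Type*} [MeasurableSpace α] [MeasurableSpace β]
    [MeasurableSpace γ] (κ : Kernel α β) [IsSFiniteKernel κ] {f : α × β → Measure γ}
    (hf : Measurable f) :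
    Measurable (fun a => (κ a).bind (fun b => f (a, b))) := by
  apply Measure.measurable_of_measurable_coe
  intro C hC
  have h1 : ∀ a, (κ a).bind (fun b => f (a, b)) C = ∫⁻ b, f (a, b) C ∂κ a := fun a =>
    Measure.bind_apply hC (hf.comp measurable_prodMk_left).aemeasurable
  simp_rw [h1]
  exact Measurable.lintegral_kernel_prod_right
    ((Measure.measurable_coe hC).comp hf : Measurable (Function.uncurry fun a b => f (a, b) C))

variable (ν₀ : Measure S) (p : Kernel (S × A) S) [IsMarkovKernel p] (π : Policy S A)

/-- The parameter-dependent map sending `(h, a)` to the law of the next history. -/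
lemma measurable_stepFun (t : ℕ) :
    Measurable (fun q : Hist S A t × A =>
      (p (q.1.2, q.2)).map (fun s' => ((Fin.snoc q.1.1 (q.1.2, q.2), s') : Hist S A (t+1)))) := by
  have hG : Measurable (fun q : Hist S A t × A => (q.1.2, q.2)) :=
    (measurable_snd.comp measurable_fst).prodMk measurable_snd
  have hF : Measurable (fun q : (Hist S A t × A) × S =>
      ((Fin.snoc q.1.1.1 (q.1.1.2, q.1.2), q.2) : Hist S A (t+1))) :=
    ((measurable_snocFun t).comp measurable_fst).prodMk measurable_snd
  apply Measure.measurable_of_measurable_coe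
  intro C hC
  have h1 : ∀ q : Hist S A t × A,
      (p (q.1.2, q.2)).map
          (fun s' => ((Fin.snoc q.1.1 (q.1.2, q.2), s') : Hist S A (t+1))) C
        = (p.comap (fun q : Hist S A t × A => (q.1.2, q.2)) hG) q
            (Prod.mk q ⁻¹' ((fun q : (Hist S A t × A) × S =>
              ((Fin.snoc q.1.1.1 (q.1.1.2, q.1.2), q.2) : Hist S A (t+1))) ⁻¹' C)) := by
    intro q
    have hm : Measurable (fun s' : S =>
        ((Fin.snoc q.1.1 (q.1.2, q.2), s') : Hist S A (t+1))) := measurable_prodMk_left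
    rw [Kernel.comap_apply, Measure.map_apply hm hC]
    rfl
  simp_rw [h1]
  exact Kernel.measurable_kernel_prodMk_left (hF hC)

lemma measurable_actFun (t : ℕ) :
    Measurable (fun h : Hist S A t => (π.kernel t h).map (fun a => ((h.2, a) : S × A))) := by
  haveI := π.markov t
  exact measurable_map_param (π.kernel t)
    ((measurable_snd.comp measurable_fst).prodMk measurable_snd)

lemma measurable_histStep (t : ℕ) :
    Measurable (fun h : Hist S A t => (π.kernel t h).bind fun a =>
      (p (h.2, a)).map fun s' => ((Fin.snoc h.1 (h.2, a), s') : Hist S A (t+1))) := by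
  haveI := π.markov t
  exact measurable_bind_param (π.kernel t)
    (f := fun q : Hist S A t × A =>
      (p (q.1.2, q.2)).map fun s' => ((Fin.snoc q.1.1 (q.1.2, q.2), s') : Hist S A (t+1)))
    (measurable_stepFun p t)

/-- The state marginal of `pairLaw` is the current-state marginal of `histLaw`. -/
lemma pairLaw_map_fst (t : ℕ) :
    (pairLaw ν₀ (fun _ x => p x) π.run t).map Prod.fst =
      (histLaw ν₀ (fun _ x => p x) π.run t).map Prod.snd := by
  haveI := π.markov t
  ext C hC
  rw [Measure.map_apply measurable_fst hC, Measure.map_apply measurable_snd hC]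
  have hrun : π.run t = fun h => (π.kernel t h : Measure A) := rfl
  rw [pairLaw, hrun, Measure.bind_apply (measurable_fst hC) (measurable_actFun π t).aemeasurable]
  have h1 : ∀ h : Hist S A t,
      (π.kernel t h).map (fun a => ((h.2, a) : S × A)) (Prod.fst ⁻¹' C) =
        (Prod.snd ⁻¹' C : Set (Hist S A t)).indicator 1 h := by
    intro h
    rw [Measure.map_apply (measurable_prodMk_left) (measurable_fst hC)]
    by_cases hh : h.2 ∈ C
    · have : (fun a : A => ((h.2, a) : S × A)) ⁻¹' (Prod.fst ⁻¹' C) = Set.univ := by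
        ext a; simp [hh]
      simp [this, Set.indicator_of_mem, hh]
    · have : (fun a : A => ((h.2, a) : S × A)) ⁻¹' (Prod.fst ⁻¹' C) = ∅ := by
        ext a; simp [hh]
      simp [this, Set.indicator_of_notMem, hh]
  simp_rw [h1]
  rw [lintegral_indicator_one (measurable_snd hC)]

lemma histLaw_zero_map_snd :
    (histLaw ν₀ (fun _ x => p x) π.run 0).map Prod.snd = ν₀ := by
  rw [histLaw, Measure.map_map measurable_snd (measurable_prodMk_left)]
  simp [Function.comp_def]

lemma histLaw_succ_map_snd (t : ℕ) {C : Set S} (hC : MeasurableSet C) :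
    (histLaw ν₀ (fun _ x => p x) π.run (t+1)).map Prod.snd C =
      ∫⁻ x, p x C ∂(pairLaw ν₀ (fun _ x => p x) π.run t) := by
  haveI := π.markov t
  rw [Measure.map_apply measurable_snd hC]
  have hrun : π.run t = fun h => (π.kernel t h : Measure A) := rfl
  rw [histLaw, hrun,
    Measure.bind_apply (measurable_snd hC) (measurable_histStep p π t).aemeasurable]
  -- left side: iterated integral
  have h1 : ∀ h : Hist S A t,
      ((π.kernel t h).bind fun a =>
        (p (h.2, a)).map fun s' => ((Fin.snoc h.1 (h.2, a), s') : Hist S A (t+1)))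
        (Prod.snd ⁻¹' C) = ∫⁻ a, p (h.2, a) C ∂(π.kernel t h) := by
    intro h
    have hm : Measurable (fun a : A =>
        (p (h.2, a)).map fun s' => ((Fin.snoc h.1 (h.2, a), s') : Hist S A (t+1))) :=
      (measurable_stepFun p t).comp measurable_prodMk_left
    rw [Measure.bind_apply (measurable_snd hC) hm.aemeasurable]
    refine lintegral_congr fun a => ?_
    have hm2 : Measurable (fun s' : S => ((Fin.snoc h.1 (h.2, a), s') : Hist S A (t+1))) :=
      measurable_prodMk_left
    rw [Measure.map_apply hm2 (measurable_snd hC)]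
    rfl
  simp_rw [h1]
  -- right side
  rw [pairLaw, hrun, Measure.lintegral_bind (measurable_actFun π t).aemeasurable (p.measurable_coe hC).aemeasurable]
  refine lintegral_congr fun h => ?_
  rw [lintegral_map (p.measurable_coe hC) (measurable_prodMk_left)]

end AuxLemmas

/-- For every (possibly history-dependent) policy `π`, the discounted state
occupancy measure (the state marginal `ν̃^π` of the occupancy measure `ν^π`) satisfies the
recursion `ν̃^π(B) = ν₀(B) + β ∫_{S×A} p(B|s,a) dν^π(s,a)` for every Borel set `B ⊆ S`. -/
theorem occupancy_state_marginal_recursion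
    {S A : Type*} [MeasurableSpace S] [TopologicalSpace S] [PolishSpace S] [BorelSpace S]
    [MeasurableSpace A] [TopologicalSpace A] [PolishSpace A] [BorelSpace A] [CompactSpace A]
    (β : ℝ) (hβ0 : 0 ≤ β) (hβ1 : β < 1)
    (p : Kernel (S × A) S) (hp : IsMarkovKernel p)
    (ν₀ : Measure S) (hν₀ : IsProbabilityMeasure ν₀)
    (π : Policy S A) (B : Set S) (hB : MeasurableSet B) :
    (occupancy β ν₀ (fun x => p x) π.run).map Prod.fst B =
      ν₀ B + ENNReal.ofReal β * ∫⁻ x, p x B ∂(occupancy β ν₀ (fun x => p x) π.run) := by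
  haveI : IsMarkovKernel p := hp
  have key : ∀ t, (pairLaw ν₀ (fun _ x => p x) π.run t).map Prod.fst B =
      (histLaw ν₀ (fun _ x => p x) π.run t).map Prod.snd B := fun t => by
    rw [pairLaw_map_fst]
  rw [show occupancy β ν₀ (fun x => p x) π.run = Measure.sum fun t : ℕ => ENNReal.ofReal (β ^ t) • pairLaw ν₀ (fun _ x => p x) π.run t from rfl, Measure.map_apply measurable_fst hB, Measure.sum_apply _ (measurable_fst hB)]
  have hterm : ∀ t : ℕ, (ENNReal.ofReal (β ^ t) • pairLaw ν₀ (fun _ x => p x) π.run t)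
      (Prod.fst ⁻¹' B) = ENNReal.ofReal (β ^ t) *
      (pairLaw ν₀ (fun _ x => p x) π.run t).map Prod.fst B := by
    intro t
    rw [Measure.smul_apply, smul_eq_mul, Measure.map_apply measurable_fst hB]
  simp_rw [hterm]
  rw [tsum_eq_zero_add' ENNReal.summable]
  have h0 : (pairLaw ν₀ (fun _ x => p x) π.run 0).map Prod.fst B = ν₀ B := by
    rw [key 0, histLaw_zero_map_snd]
  have hs : ∀ t : ℕ, (pairLaw ν₀ (fun _ x => p x) π.run (t+1)).map Prod.fst B =
      ∫⁻ x, p x B ∂(pairLaw ν₀ (fun _ x => p x) π.run t) := fun t => by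
    rw [key (t+1), histLaw_succ_map_snd ν₀ p π t hB]
  simp_rw [hs, h0, pow_zero, ENNReal.ofReal_one, one_mul]
  congr 1
  rw [lintegral_sum_measure]
  simp_rw [lintegral_smul_measure]
  rw [← ENNReal.tsum_mul_left]
  refine tsum_congr fun t => ?_
  rw [smul_eq_mul, ← mul_assoc, ← ENNReal.ofReal_mul hβ0, ← pow_succ']
end

section
/- If u : S → [0,∞) is Borel with ||u||_w ≤ L_{t+1}, then ||T_t u||_w ≤ L_t; that is, the time-t Bellman operator maps the ball {u : ||u||_w ≤ L_{t+1}} into the ball {u : ||u||_w ≤ L_t}. (First part of the operator lemma.) -/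
open MeasureTheory ProbabilityTheory

noncomputable section

/-- The constant `L_t = Σ_{k ≥ t} (βα)^{k-t} M_k` where `M_k = γ^k R`. -/
def Lconst (β α γ R : ℝ) (t : ℕ) : ℝ := ∑' k : ℕ, (β * α) ^ k * (γ ^ (t + k) * R)

/-- The time-`t` Bellman operator
`(T_t u)(s) = sup_{a ∈ A} [ r_t(s,a) + β ∫_S u(s') p_t(ds'|s,a) ]`. -/
def bellman {S A : Type*} [MeasurableSpace S] [MeasurableSpace A]
    (β : ℝ) (p : ℕ → Kernel (S × A) S) (r : ℕ → S → A → ℝ) (t : ℕ)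
    (u : S → ℝ) (s : S) : ℝ :=
  ⨆ a : A, (r t s a + β * ∫ s', u s' ∂((p t) (s, a)))

lemma Lconst_closed (β α γ R : ℝ) (hx0 : 0 ≤ β * α * γ) (hx1 : β * α * γ < 1) (t : ℕ) :
    Lconst β α γ R t = γ ^ t * R * (1 - β * α * γ)⁻¹ := by
  unfold Lconst
  have h : ∀ k : ℕ, (β * α) ^ k * (γ ^ (t + k) * R) = γ ^ t * R * (β * α * γ) ^ k := by
    intro k
    rw [pow_add, mul_pow, mul_pow]
    ring
  rw [tsum_congr h, tsum_mul_left, tsum_geometric_of_lt_one hx0 hx1]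

/-- **first part of the operator lemma.** If `u : S → [0,∞)` is Borel with
`‖u‖_w ≤ L_{t+1}`, then `‖T_t u‖_w ≤ L_t`: the time-`t` Bellman operator maps the
`w`-norm ball of radius `L_{t+1}` into the ball of radius `L_t`. -/
theorem bellman_maps_wnorm_ball
    {S A : Type*} [MeasurableSpace S] [TopologicalSpace S] [PolishSpace S] [BorelSpace S]
    [MeasurableSpace A] [TopologicalSpace A] [PolishSpace A] [BorelSpace A] [CompactSpace A]
    [Nonempty A]
    (β : ℝ) (hβ0 : 0 ≤ β) (hβ1 : β < 1) (α : ℝ) (hα : 0 < α)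
    (w : S → ℝ) (hwm : Measurable w) (hw1 : ∀ s, 1 ≤ w s)
    (p : ℕ → Kernel (S × A) S) (hp : ∀ t, IsMarkovKernel (p t))
    (hpw : ∀ t (s : S) (a : A), (∫ s', w s' ∂((p t) (s, a))) ≤ α * w s)
    (hwint : ∀ t (s : S) (a : A), Integrable w ((p t) (s, a)))
    (r : ℕ → S → A → ℝ) (hrm : ∀ t, Measurable fun x : S × A => r t x.1 x.2)
    (hr0 : ∀ t s a, 0 ≤ r t s a)
    (γ R : ℝ) (hγ : 1 ≤ γ) (hR : 0 < R) (hβαγ : β * α * γ < 1)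
    (hrw : ∀ t s a, r t s a ≤ (γ ^ t * R) * w s)
    (t : ℕ) (u : S → ℝ) (hum : Measurable u) (hu0 : ∀ s, 0 ≤ u s)
    (hu : ∀ s, |u s| ≤ Lconst β α γ R (t + 1) * w s) :
    ∀ s, |bellman β p r t u s| ≤ Lconst β α γ R t * w s := by
  intro s
  have hx0 : 0 ≤ β * α * γ := by positivity
  have hL : Lconst β α γ R t = γ ^ t * R * (1 - β * α * γ)⁻¹ :=
    Lconst_closed β α γ R hx0 hβαγ t
  have hL1 : Lconst β α γ R (t + 1) = γ ^ (t + 1) * R * (1 - β * α * γ)⁻¹ :=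
    Lconst_closed β α γ R hx0 hβαγ (t + 1)
  set L1 := Lconst β α γ R (t + 1) with hL1def
  have hinv : 0 ≤ (1 - β * α * γ)⁻¹ := by
    have : 0 < 1 - β * α * γ := by linarith
    positivity
  have hL1nonneg : 0 ≤ L1 := by rw [hL1]; positivity
  have hrec : Lconst β α γ R t = γ ^ t * R + β * α * L1 := by
    rw [hL, hL1]
    have h1 : 1 - β * α * γ ≠ 0 := by intro h; rw [sub_eq_zero] at h; linarith
    field_simp
    ring
  have hws : 0 ≤ w s := le_trans zero_le_one (hw1 s)
  -- bound on each term
  have hterm : ∀ a : A, r t s a + β * ∫ s', u s' ∂((p t) (s, a)) ≤ Lconst β α γ R t * w s := by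
    intro a
    have huint : Integrable u ((p t) (s, a)) := by
      refine Integrable.mono' (((hwint t s a)).const_mul L1) hum.aestronglyMeasurable ?_
      exact Filter.Eventually.of_forall fun s' => by
        rw [Real.norm_eq_abs]; exact hu s'
    have hIu : ∫ s', u s' ∂((p t) (s, a)) ≤ L1 * (α * w s) := by
      calc ∫ s', u s' ∂((p t) (s, a)) ≤ ∫ s', L1 * w s' ∂((p t) (s, a)) := by
            refine integral_mono huint ((hwint t s a).const_mul L1) fun s' => ?_
            exact le_trans (le_abs_self _) (hu s')
        _ = L1 * ∫ s', w s' ∂((p t) (s, a)) := MeasureTheory.integral_const_mul _ _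
        _ ≤ L1 * (α * w s) := mul_le_mul_of_nonneg_left (hpw t s a) hL1nonneg
    calc r t s a + β * ∫ s', u s' ∂((p t) (s, a))
        ≤ (γ ^ t * R) * w s + β * (L1 * (α * w s)) := by
          exact add_le_add (hrw t s a) (mul_le_mul_of_nonneg_left hIu hβ0)
      _ = (γ ^ t * R + β * α * L1) * w s := by ring
      _ = Lconst β α γ R t * w s := by rw [hrec]
  have hbdd : BddAbove (Set.range fun a : A => r t s a + β * ∫ s', u s' ∂((p t) (s, a))) :=
    ⟨Lconst β α γ R t * w s, by rintro _ ⟨a, rfl⟩; exact hterm a⟩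
  have hsup_le : bellman β p r t u s ≤ Lconst β α γ R t * w s :=
    ciSup_le hterm
  have hsup_nonneg : 0 ≤ bellman β p r t u s := by
    obtain ⟨a⟩ := ‹Nonempty A›
    have h0 : 0 ≤ r t s a + β * ∫ s', u s' ∂((p t) (s, a)) := by
      have : 0 ≤ ∫ s', u s' ∂((p t) (s, a)) := integral_nonneg hu0
      have := mul_nonneg hβ0 this
      linarith [hr0 t s a]
    exact le_trans h0 (le_ciSup hbdd a)
  rw [abs_of_nonneg hsup_nonneg]
  exact hsup_le
end
end

section
/- For any Borel functions u, x : S → [0,∞) with finite w-norm, the time-t Bellman operator satisfies the Lipschitz bound ||T_t u − T_t x||_w ≤ αβ ||u − x||_w. (Second part of the operator lemma: each Bellman operator is an αβ-contraction in the w-norm.) -/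
open MeasureTheory ProbabilityTheory

noncomputable section

/-- **second part of the operator lemma.** For any Borel `u, x : S → [0,∞)`
with finite `w`-norm, the time-`t` Bellman operator satisfies the Lipschitz bound
`‖T_t u − T_t x‖_w ≤ αβ ‖u − x‖_w`; equivalently, whenever `|u − x| ≤ C·w` pointwise,
also `|T_t u − T_t x| ≤ αβC·w` pointwise. -/
theorem bellman_contraction_wnorm
    {S A : Type*} [MeasurableSpace S] [TopologicalSpace S] [PolishSpace S] [BorelSpace S]
    [MeasurableSpace A] [TopologicalSpace A] [PolishSpace A] [BorelSpace A] [CompactSpace A]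
    [Nonempty A]
    (β : ℝ) (hβ0 : 0 ≤ β) (hβ1 : β < 1) (α : ℝ) (hα : 0 < α)
    (w : S → ℝ) (hwm : Measurable w) (hw1 : ∀ s, 1 ≤ w s)
    (p : ℕ → Kernel (S × A) S) (hp : ∀ t, IsMarkovKernel (p t))
    (hpw : ∀ t (s : S) (a : A), (∫ s', w s' ∂((p t) (s, a))) ≤ α * w s)
    (hwint : ∀ t (s : S) (a : A), Integrable w ((p t) (s, a)))
    (r : ℕ → S → A → ℝ) (hrm : ∀ t, Measurable fun q : S × A => r t q.1 q.2)
    (hr0 : ∀ t s a, 0 ≤ r t s a)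
    (γ R : ℝ) (hγ : 1 ≤ γ) (hR : 0 < R) (hβαγ : β * α * γ < 1)
    (hrw : ∀ t s a, r t s a ≤ (γ ^ t * R) * w s)
    (t : ℕ) (u x : S → ℝ) (hum : Measurable u) (hxm : Measurable x)
    (hu0 : ∀ s, 0 ≤ u s) (hx0 : ∀ s, 0 ≤ x s)
    (hufin : ∃ Cu : ℝ, ∀ s, |u s| ≤ Cu * w s)
    (hxfin : ∃ Cx : ℝ, ∀ s, |x s| ≤ Cx * w s) :
    ∀ C : ℝ, (∀ s, |u s - x s| ≤ C * w s) →
      ∀ s, |bellman β p r t u s - bellman β p r t x s| ≤ α * β * C * w s := by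
  intro C hC s
  obtain ⟨Cu, hCu⟩ := hufin
  obtain ⟨Cx, hCx⟩ := hxfin
  have hw0 : (0:ℝ) < w s := lt_of_lt_of_le one_pos (hw1 s)
  have hC0 : 0 ≤ C := by nlinarith [hC s, abs_nonneg (u s - x s), hw1 s]
  -- integrability
  have hiw : ∀ a : A, Integrable w ((p t) (s, a)) := fun a => hwint t s a
  have hiu : ∀ a : A, Integrable u ((p t) (s, a)) := fun a =>
    ((hiw a).const_mul Cu).mono' hum.aestronglyMeasurable
      (Filter.Eventually.of_forall fun s' => by
        rw [Real.norm_eq_abs]; exact hCu s')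
  have hix : ∀ a : A, Integrable x ((p t) (s, a)) := fun a =>
    ((hiw a).const_mul Cx).mono' hxm.aestronglyMeasurable
      (Filter.Eventually.of_forall fun s' => by
        rw [Real.norm_eq_abs]; exact hCx s')
  set K : ℝ := α * β * C * w s with hK
  -- pointwise bound on candidate values
  have key : ∀ a : A,
      |(r t s a + β * ∫ s', u s' ∂((p t) (s, a))) -
        (r t s a + β * ∫ s', x s' ∂((p t) (s, a)))| ≤ K := by
    intro a
    have h1 : (r t s a + β * ∫ s', u s' ∂((p t) (s, a))) -
        (r t s a + β * ∫ s', x s' ∂((p t) (s, a)))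
        = β * ∫ s', (u s' - x s') ∂((p t) (s, a)) := by
      rw [integral_sub (hiu a) (hix a)]; ring
    rw [h1, abs_mul, abs_of_nonneg hβ0]
    have h2 : |∫ s', (u s' - x s') ∂((p t) (s, a))| ≤
        ∫ s', |u s' - x s'| ∂((p t) (s, a)) := by
      simpa [Real.norm_eq_abs] using
        norm_integral_le_integral_norm (μ := (p t) (s, a)) (fun s' => u s' - x s')
    have h3 : (∫ s', |u s' - x s'| ∂((p t) (s, a))) ≤
        ∫ s', C * w s' ∂((p t) (s, a)) :=
      integral_mono ((hiu a).sub (hix a)).abs ((hiw a).const_mul C) fun s' => hC s'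
    have h4 : (∫ s', C * w s' ∂((p t) (s, a))) = C * ∫ s', w s' ∂((p t) (s, a)) :=
      integral_const_mul _ _
    have h5 : C * (∫ s', w s' ∂((p t) (s, a))) ≤ C * (α * w s) :=
      mul_le_mul_of_nonneg_left (hpw t s a) hC0
    calc β * |∫ s', (u s' - x s') ∂((p t) (s, a))|
        ≤ β * (C * (α * w s)) := by
          apply mul_le_mul_of_nonneg_left _ hβ0
          calc |∫ s', (u s' - x s') ∂((p t) (s, a))|
              ≤ ∫ s', |u s' - x s'| ∂((p t) (s, a)) := h2
            _ ≤ ∫ s', C * w s' ∂((p t) (s, a)) := h3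
            _ = C * ∫ s', w s' ∂((p t) (s, a)) := h4
            _ ≤ C * (α * w s) := h5
      _ = K := by rw [hK]; ring
  -- boundedness of the two families
  have bdd : ∀ (v : S → ℝ) (Cv : ℝ), (∀ s', |v s'| ≤ Cv * w s') →
      (∀ a, Integrable v ((p t) (s, a))) →
      BddAbove (Set.range fun a : A => r t s a + β * ∫ s', v s' ∂((p t) (s, a))) := by
    intro v Cv hCv hiv
    refine ⟨γ ^ t * R * w s + β * (|Cv| * (α * w s)), Set.forall_mem_range.2 fun a => ?_⟩
    have hint : (∫ s', v s' ∂((p t) (s, a))) ≤ |Cv| * (α * w s) := by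
      have hb : (∫ s', v s' ∂((p t) (s, a))) ≤ ∫ s', |Cv| * w s' ∂((p t) (s, a)) := by
        refine integral_mono (hiv a) ((hiw a).const_mul _) fun s' => ?_
        exact (le_abs_self _).trans ((hCv s').trans
          (mul_le_mul_of_nonneg_right (le_abs_self Cv) (le_trans zero_le_one (hw1 s'))))
      rw [integral_const_mul] at hb
      exact hb.trans (mul_le_mul_of_nonneg_left (hpw t s a) (abs_nonneg Cv))
    exact add_le_add (hrw t s a) (mul_le_mul_of_nonneg_left hint hβ0)
  have bu := bdd u Cu hCu hiu
  have bx := bdd x Cx hCx hix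
  -- sup comparison
  have hux : bellman β p r t u s ≤ bellman β p r t x s + K := by
    refine ciSup_le fun a => ?_
    have := (abs_le.1 (key a)).2
    have hle := le_ciSup bx a
    unfold bellman
    linarith
  have hxu : bellman β p r t x s ≤ bellman β p r t u s + K := by
    refine ciSup_le fun a => ?_
    have := (abs_le.1 (key a)).1
    have hle := le_ciSup bu a
    unfold bellman
    linarith
  rw [abs_le]
  constructor <;> linarith
end
end

section
/- Let v : S → [0,∞) be a bounded Lipschitz function with Lipschitz constant at most L₂/(1−βK₂). Then the function s ↦ sup_{a ∈ A} [ r(s,a,μ) + β ∫_S v(s') p(ds'|s,a,μ) ] is Lipschitz on S with Lipschitz constant at most L₂/(1−βK₂). (Second part of Theorem 3: H₁(Q,μ)_max preserves the Lipschitz ball of radius L₂/(1−βK₂).) -/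
open MeasureTheory ProbabilityTheory

noncomputable section

/-- **second part of Theorem 3.** If `v : S → [0,∞)` is bounded and
Lipschitz with constant at most `L₂/(1−βK₂)`, then
`s ↦ sup_{a ∈ A} [ r(s,a,μ) + β ∫ v dp(·|s,a,μ) ]` is Lipschitz with constant at most
`L₂/(1−βK₂)`: the map `H₁(Q,μ)_max` preserves the Lipschitz ball of radius
`L₂/(1−βK₂)`. -/
theorem meanFieldOperator_preserves_lipschitz_ball
    {S A : Type*} [MetricSpace S] [PolishSpace S] [MeasurableSpace S] [BorelSpace S]
    [MeasurableSpace A] [TopologicalSpace A] [PolishSpace A] [BorelSpace A] [CompactSpace A]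
    [Nonempty A]
    (β : ℝ) (hβ0 : 0 ≤ β) (hβ1 : β < 1)
    (μ : Measure S) (hμ : IsProbabilityMeasure μ)
    (p : S → A → Measure S → Measure S)
    (hp : ∀ s a μ', IsProbabilityMeasure (p s a μ'))
    (r : S → A → Measure S → ℝ)
    (hrb : ∃ C : ℝ, ∀ s a μ', |r s a μ'| ≤ C)
    (hr0 : ∀ s a μ', 0 ≤ r s a μ')
    (L₂ K₂ : ℝ)
    -- (i) the reward is `L₂`-Lipschitz in the state, uniformly in `(a, μ')`
    (hrLip : ∀ (s s₂ : S) (a : A) (μ' : Measure S),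
      |r s a μ' - r s₂ a μ'| ≤ L₂ * dist s s₂)
    -- (ii) Kantorovich–Rubinstein form of `W₁(p(·|s,a,μ'), p(·|s₂,a,μ')) ≤ K₂ d_X(s,s₂)`
    (hpLip : ∀ (s s₂ : S) (a : A) (μ' : Measure S) (g : S → ℝ),
      (∃ C : ℝ, ∀ y, |g y| ≤ C) → LipschitzWith 1 g →
      |(∫ s', g s' ∂(p s a μ')) - ∫ s', g s' ∂(p s₂ a μ')| ≤ K₂ * dist s s₂)
    -- (iii)
    (hβK : β * K₂ < 1)
    (v : S → ℝ) (hv0 : ∀ s, 0 ≤ v s) (hvb : ∃ C : ℝ, ∀ s, |v s| ≤ C)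
    (hvLip : ∀ s s₂ : S, |v s - v s₂| ≤ L₂ / (1 - β * K₂) * dist s s₂) :
    ∀ s s₂ : S,
      |(⨆ a : A, (r s a μ + β * ∫ s', v s' ∂(p s a μ))) -
          ⨆ a : A, (r s₂ a μ + β * ∫ s', v s' ∂(p s₂ a μ))| ≤
        L₂ / (1 - β * K₂) * dist s s₂ := by
  obtain ⟨Cr, hCr⟩ := hrb
  obtain ⟨Cv, hCv⟩ := hvb
  intro s s₂
  set L : ℝ := L₂ / (1 - β * K₂) with hL
  have h1 : (0:ℝ) < 1 - β * K₂ := by linarith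
  by_cases hss : s = s₂
  · subst hss; simp
  have hd : 0 < dist s s₂ := dist_pos.2 hss
  have a₀ : A := Classical.arbitrary A
  have hL₂ : 0 ≤ L₂ := by
    have h := hrLip s s₂ a₀ μ
    nlinarith [abs_nonneg (r s a₀ μ - r s₂ a₀ μ)]
  have hLnn : 0 ≤ L := div_nonneg hL₂ h1.le
  -- boundedness of the integrals
  have hint : ∀ (t : S) (a : A), |∫ s', v s' ∂ p t a μ| ≤ Cv := by
    intro t a
    haveI := hp t a μ
    have := norm_integral_le_of_norm_le_const (μ := p t a μ) (C := Cv)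
      (f := fun s' => v s') (Filter.Eventually.of_forall fun x => by
        simpa [Real.norm_eq_abs] using hCv x)
    simpa [Real.norm_eq_abs, measure_univ] using this
  have hbdF : ∀ t : S, BddAbove
      (Set.range fun a : A => r t a μ + β * ∫ s', v s' ∂ p t a μ) := by
    intro t
    refine ⟨Cr + β * Cv, ?_⟩
    rintro x ⟨a, rfl⟩
    have h1' := hCr t a μ
    have h2' := hint t a
    have h3' : β * ∫ s', v s' ∂ p t a μ ≤ β * Cv := by
      apply mul_le_mul_of_nonneg_left _ hβ0
      exact (abs_le.1 h2').2
    have := (abs_le.1 h1').2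
    dsimp only
    linarith
  -- key pointwise estimate
  have key : ∀ a : A,
      |(r s a μ + β * ∫ s', v s' ∂ p s a μ) -
        (r s₂ a μ + β * ∫ s', v s' ∂ p s₂ a μ)| ≤ L * dist s s₂ := by
    intro a
    have hr' := hrLip s s₂ a μ
    have hint' : |(∫ s', v s' ∂ p s a μ) - ∫ s', v s' ∂ p s₂ a μ|
        ≤ L * K₂ * dist s s₂ := by
      by_cases hL0 : L₂ = 0
      · have hLz : L = 0 := by rw [hL, hL0, zero_div]
        have hvconst : ∀ x, v x = v s := by
          intro x
          have h := hvLip x s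
          rw [hLz] at h
          have : |v x - v s| ≤ 0 := by linarith
          have := abs_nonpos_iff.1 this
          linarith [sub_eq_zero.1 this]
        have hI : ∀ (t : S) (a' : A), (∫ s', v s' ∂ p t a' μ) = v s := by
          intro t a'
          haveI := hp t a' μ
          simp only [hvconst]
          simp [measure_univ]
        rw [hI, hI, sub_self, abs_zero]
        have hK₂ : 0 ≤ K₂ := by
          have h := hpLip s s₂ a μ (fun _ => 0) ⟨0, fun y => by simp⟩
            (LipschitzWith.const' 0)
          simp at h
          nlinarith
        positivity
      · have hLpos : 0 < L := div_pos (lt_of_le_of_ne hL₂ (Ne.symm hL0)) h1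
        have hlip1 : LipschitzWith 1 (fun x => v x / L) := by
          apply LipschitzWith.of_dist_le_mul
          intro x y
          rw [Real.dist_eq, div_sub_div_same, abs_div, abs_of_pos hLpos,
            div_le_iff₀ hLpos]
          simp only [NNReal.coe_one, one_mul]
          calc |v x - v y| ≤ L * dist x y := hvLip x y
            _ = dist x y * L := mul_comm _ _
        have hb : ∃ C : ℝ, ∀ y, |v y / L| ≤ C := by
          refine ⟨Cv / L, fun y => ?_⟩
          rw [abs_div, abs_of_pos hLpos]
          exact div_le_div_of_nonneg_right (hCv y) hLpos.le
        have h2 := hpLip s s₂ a μ (fun x => v x / L) hb hlip1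
        simp only [integral_div] at h2
        rw [div_sub_div_same, abs_div, abs_of_pos hLpos, div_le_iff₀ hLpos] at h2
        calc |(∫ s', v s' ∂ p s a μ) - ∫ s', v s' ∂ p s₂ a μ|
            ≤ K₂ * dist s s₂ * L := h2
          _ = L * K₂ * dist s s₂ := by ring
    have hexp : (r s a μ + β * ∫ s', v s' ∂ p s a μ) -
        (r s₂ a μ + β * ∫ s', v s' ∂ p s₂ a μ) =
        (r s a μ - r s₂ a μ) +
          β * ((∫ s', v s' ∂ p s a μ) - ∫ s', v s' ∂ p s₂ a μ) := by ring
    rw [hexp]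
    have htri := abs_add_le (r s a μ - r s₂ a μ)
      (β * ((∫ s', v s' ∂ p s a μ) - ∫ s', v s' ∂ p s₂ a μ))
    have habs : |β * ((∫ s', v s' ∂ p s a μ) - ∫ s', v s' ∂ p s₂ a μ)|
        = β * |(∫ s', v s' ∂ p s a μ) - ∫ s', v s' ∂ p s₂ a μ| := by
      rw [abs_mul, abs_of_nonneg hβ0]
    have heq : L₂ * dist s s₂ + β * (L * K₂ * dist s s₂) = L * dist s s₂ := by
      have hne : (1:ℝ) - β * K₂ ≠ 0 := ne_of_gt h1
      rw [hL]
      field_simp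
      ring
    have hmul : β * |(∫ s', v s' ∂ p s a μ) - ∫ s', v s' ∂ p s₂ a μ|
        ≤ β * (L * K₂ * dist s s₂) := mul_le_mul_of_nonneg_left hint' hβ0
    linarith [htri, habs ▸ htri]
  -- conclude via sup comparison
  have hbd1 := hbdF s
  have hbd2 := hbdF s₂
  rw [abs_sub_le_iff]
  constructor
  · rw [sub_le_iff_le_add]
    refine ciSup_le fun a => ?_
    have h1' := (abs_sub_le_iff.1 (key a)).1
    have h2' := le_ciSup hbd2 a
    linarith
  · rw [sub_le_iff_le_add]
    refine ciSup_le fun a => ?_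
    have h1' := (abs_sub_le_iff.1 (key a)).2
    have h2' := le_ciSup hbd1 a
    linarith
end
end
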